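/- There exists a compact set X ⊆ ℝ such that lpdim X = 0, dpdim X = 1/2 and lbdim X = 1; in particular lpdim X < dpdim X < lbdim X. -/

import Mathlib

open Filter MeasureTheory Set
open scoped ENNReal NNReal Topology

namespace ZPaper

variable {X : Type*} [MetricSpace X] {Y : Type*} [MetricSpace Y]

/-- The `δ`-capacity of a set `E`: the supremum of cardinalities of subsets of `E`
whose points are mutually more than `δ` apart. -/
noncomputable def capacity (δ : ℝ) (E : Set X) : ℝ≥0∞ :=
  ⨆ (F : Finset X) (_ : ↑F ⊆ E ∧ ∀ x ∈ F, ∀ y ∈ F, x ≠ y → δ < dist x y),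
    (F.card : ℝ≥0∞)

/-- Lower box (Minkowski) dimension: `liminf_{δ→0} log C_δ(E) / |log δ|`. -/
noncomputable def lbdim (E : Set X) : EReal :=
  Filter.liminf (fun δ : ℝ => (capacity δ E).log / ((|Real.log δ| : ℝ) : EReal)) (𝓝[>] (0:ℝ))

/-- Upper box (Minkowski) dimension: `limsup_{δ→0} log C_δ(E) / |log δ|`. -/
noncomputable def ubdim (E : Set X) : EReal :=
  Filter.limsup (fun δ : ℝ => (capacity δ E).log / ((|Real.log δ| : ℝ) : EReal)) (𝓝[>] (0:ℝ))

/-- Upper packing dimension: infimum of `sup_n ubdim Eₙ` over countable covers of `E`. -/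
noncomputable def updim (E : Set X) : EReal :=
  ⨅ (A : ℕ → Set X) (_ : E ⊆ ⋃ n, A n), ⨆ n, ubdim (A n)

/-- Lower packing dimension: infimum of `sup_n lbdim Eₙ` over countable covers of `E`. -/
noncomputable def lpdim (E : Set X) : EReal :=
  ⨅ (A : ℕ → Set X) (_ : E ⊆ ⋃ n, A n), ⨆ n, lbdim (A n)

/-- Directed lower packing dimension: infimum of `sup_n lbdim Eₙ` over increasing
sequences with union `E`. -/
noncomputable def dpdim (E : Set X) : EReal :=
  ⨅ (A : ℕ → Set X) (_ : Monotone A ∧ (⋃ n, A n) = E), ⨆ n, lbdim (A n)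

/-- A packing: a family of pairs (center, radius) with positive radii such that
`d(x_i, x_j) > r_i` for distinct members. -/
def IsPacking (π : Set (X × ℝ)) : Prop :=
  (∀ p ∈ π, 0 < p.2) ∧ ∀ p ∈ π, ∀ q ∈ π, p ≠ q → p.2 < dist p.1 q.1

/-- A packing of a set `E`: all centers belong to `E`. -/
def IsPackingOf (π : Set (X × ℝ)) (E : Set X) : Prop :=
  IsPacking π ∧ ∀ p ∈ π, p.1 ∈ E

/-- A uniform packing: all radii equal. -/
def IsUniform (π : Set (X × ℝ)) : Prop := ∀ p ∈ π, ∀ q ∈ π, p.2 = q.2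

/-- A scale: a set of positive reals with `0` in its closure. -/
def IsScale (Δ : Set ℝ) : Prop := Δ ⊆ Set.Ioi (0:ℝ) ∧ (0:ℝ) ∈ closure Δ

/-- A `(Δ,δ)`-packing of `E`: a packing of `E` with radii in `Δ ∩ (0, δ]`. -/
def IsScaledPacking (Δ : Set ℝ) (δ : ℝ) (π : Set (X × ℝ)) (E : Set X) : Prop :=
  IsPackingOf π E ∧ ∀ p ∈ π, p.2 ∈ Δ ∧ p.2 ≤ δ

/-- `g(π) = Σ_i g(r_i)` for a packing `π`. -/
noncomputable def packVal (g : ℝ → ℝ) (π : Set (X × ℝ)) : ℝ≥0∞ :=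
  ∑' p : π, ENNReal.ofReal (g p.1.2)

/-- `pack^g_{Δ,δ}(E) = sup{g(π) : π a (Δ,δ)-packing of E}`. -/
noncomputable def packPre (g : ℝ → ℝ) (Δ : Set ℝ) (δ : ℝ) (E : Set X) : ℝ≥0∞ :=
  ⨆ (π : Set (X × ℝ)) (_ : IsScaledPacking Δ δ π E), packVal g π

/-- `pack^g_{Δ,0}(E) = inf_{δ>0} pack^g_{Δ,δ}(E)`. -/
noncomputable def packPre0 (g : ℝ → ℝ) (Δ : Set ℝ) (E : Set X) : ℝ≥0∞ :=
  ⨅ (δ : ℝ) (_ : 0 < δ), packPre g Δ δ E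

/-- Uniform-packing (box) variant of `packPre`. -/
noncomputable def boxPre (g : ℝ → ℝ) (Δ : Set ℝ) (δ : ℝ) (E : Set X) : ℝ≥0∞ :=
  ⨆ (π : Set (X × ℝ)) (_ : IsScaledPacking Δ δ π E ∧ IsUniform π), packVal g π

/-- `boxm^g_{Δ,0}(E) = inf_{δ>0} boxm^g_{Δ,δ}(E)`. -/
noncomputable def boxPre0 (g : ℝ → ℝ) (Δ : Set ℝ) (E : Set X) : ℝ≥0∞ :=
  ⨅ (δ : ℝ) (_ : 0 < δ), boxPre g Δ δ E

/-- Munroe's Method I construction. -/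
noncomputable def methodI (τ : Set X → ℝ≥0∞) (E : Set X) : ℝ≥0∞ :=
  ⨅ (A : ℕ → Set X) (_ : E ⊆ ⋃ n, A n), ∑' n, τ (A n)

/-- The "directed" Method D construction. -/
noncomputable def methodD (τ : Set X → ℝ≥0∞) (E : Set X) : ℝ≥0∞ :=
  ⨅ (A : ℕ → Set X) (_ : Monotone A ∧ (⋃ n, A n) = E), ⨆ n, τ (A n)

/-- The `Δ`-packing measure `pack^g_Δ` (Method I of `pack^g_{Δ,0}`). -/
noncomputable def packMeasure (g : ℝ → ℝ) (Δ : Set ℝ) : Set X → ℝ≥0∞ :=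
  methodI (packPre0 g Δ)

/-- The `Δ`-box measure `boxm^g_Δ` (Method I of `boxm^g_{Δ,0}`). -/
noncomputable def boxMeasure (g : ℝ → ℝ) (Δ : Set ℝ) : Set X → ℝ≥0∞ :=
  methodI (boxPre0 g Δ)

/-- The upper packing pre-measure `upack^g_0 = pack^g_{(0,∞),0}`. -/
noncomputable def upackPre0 (g : ℝ → ℝ) : Set X → ℝ≥0∞ :=
  packPre0 g (Set.Ioi (0:ℝ))

/-- The upper packing (= packing) measure `upack^g`. -/
noncomputable def upack (g : ℝ → ℝ) : Set X → ℝ≥0∞ :=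
  methodI (upackPre0 g)

/-- The lower packing pre-measure `lpack^g_0(E) = inf_Δ pack^g_{Δ,0}(E)`. -/
noncomputable def lpackPre0 (g : ℝ → ℝ) (E : Set X) : ℝ≥0∞ :=
  ⨅ (Δ : Set ℝ) (_ : IsScale Δ), packPre0 g Δ E

/-- The lower packing measure `lpack^g`. -/
noncomputable def lpack (g : ℝ → ℝ) : Set X → ℝ≥0∞ :=
  methodI (lpackPre0 g)

/-- The directed lower packing set function `dpack^g` (Method D of `lpack^g_0`). -/
noncomputable def dpack (g : ℝ → ℝ) : Set X → ℝ≥0∞ :=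
  methodD (lpackPre0 g)

/-- The lower box (Hewitt–Stromberg) pre-measure `lboxm^g_0(E) = liminf_{δ→0} C_δ(E)·g(δ)`. -/
noncomputable def lboxPre0 (g : ℝ → ℝ) (E : Set X) : ℝ≥0∞ :=
  Filter.liminf (fun δ : ℝ => capacity δ E * ENNReal.ofReal (g δ)) (𝓝[>] (0:ℝ))

/-- The upper box pre-measure `uboxm^g_0(E) = limsup_{δ→0} C_δ(E)·g(δ)`. -/
noncomputable def uboxPre0 (g : ℝ → ℝ) (E : Set X) : ℝ≥0∞ :=
  Filter.limsup (fun δ : ℝ => capacity δ E * ENNReal.ofReal (g δ)) (𝓝[>] (0:ℝ))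

/-- The lower box (Hewitt–Stromberg) measure `lboxm^g`. -/
noncomputable def lbox (g : ℝ → ℝ) : Set X → ℝ≥0∞ := methodI (lboxPre0 g)

/-- The upper box measure `uboxm^g`. -/
noncomputable def ubox (g : ℝ → ℝ) : Set X → ℝ≥0∞ := methodI (uboxPre0 g)

/-- The directed lower box set function `dboxm^g` (Method D of `lboxm^g_0`). -/
noncomputable def dbox (g : ℝ → ℝ) : Set X → ℝ≥0∞ := methodD (lboxPre0 g)

/-- A Hausdorff function: a nondecreasing positive function on `(0,∞)`. -/
def IsHausdorffFunction (g : ℝ → ℝ) : Prop :=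
  MonotoneOn g (Set.Ioi (0:ℝ)) ∧ ∀ r : ℝ, 0 < r → 0 < g r

/-- `f ≺ g`: `lim_{r→0⁺} f(r)/g(r) = 0`. -/
def HPrec (f g : ℝ → ℝ) : Prop :=
  Tendsto (fun r => f r / g r) (𝓝[>] (0:ℝ)) (𝓝 0)

/-- The section `E_x = {y : (x,y) ∈ E}` of a set `E ⊆ X × Y`. -/
def sect (E : Set (X × Y)) (x : X) : Set Y := {y | (x, y) ∈ E}

/-- The integral of a nonnegative function against a set function, via the usual
supremum over Borel simple functions (for a Borel measure this is the Lebesgue integral). -/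
noncomputable def sLintegral (τ : Set X → ℝ≥0∞) (f : X → ℝ≥0∞) : ℝ≥0∞ :=
  letI := borel X
  ⨆ (s : SimpleFunc X ℝ≥0∞) (_ : ∀ x, s x ≤ f x), ∑ y ∈ s.range, y * τ (⇑s ⁻¹' {y})

/-- The upper integral `∫* f dτ = inf{∫ φ dτ : φ ≥ f Borel measurable}`. -/
noncomputable def upperIntegral (τ : Set X → ℝ≥0∞) (f : X → ℝ≥0∞) : ℝ≥0∞ :=
  letI := borel X
  ⨅ (φ : X → ℝ≥0∞) (_ : ∀ x, f x ≤ φ x) (_ : Measurable φ), sLintegral τ φ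

/-- `(Q,m)`-homogeneity of a set `A`: `C_r(E) ≤ Q (diam E / r)^m` for all `E ⊆ A`
and all `0 < r ≤ diam E`. -/
def IsHomog (Q m : ℝ) (A : Set X) : Prop :=
  ∀ E : Set X, E ⊆ A → ∀ r : ℝ, 0 < r → ENNReal.ofReal r ≤ EMetric.diam E →
    capacity r E ≤ ENNReal.ofReal Q * (EMetric.diam E / ENNReal.ofReal r) ^ m

/-- The Assouad dimension of a set. -/
noncomputable def adim (A : Set X) : ℝ≥0∞ :=
  ⨅ (m : ℝ) (_ : 0 < m ∧ ∃ Q : ℝ, 0 ≤ Q ∧ IsHomog Q m A), ENNReal.ofReal m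

/-- The countably stable modification of the Assouad dimension. -/
noncomputable def sadim (A : Set X) : ℝ≥0∞ :=
  ⨅ (S : ℕ → Set X) (_ : A ⊆ ⋃ n, S n), ⨆ n, adim (S n)

/-- The upper packing dimension of a Borel measure. -/
noncomputable def updimM {Z : Type*} [MetricSpace Z] [MeasurableSpace Z]
    (μ : Measure Z) : EReal :=
  ⨅ (E : Set Z) (_ : MeasurableSet[borel Z] E ∧ 0 < μ E), updim E

/-- The lower packing dimension of a Borel measure. -/
noncomputable def lpdimM {Z : Type*} [MetricSpace Z] [MeasurableSpace Z]
    (μ : Measure Z) : EReal :=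
  ⨅ (E : Set Z) (_ : MeasurableSet[borel Z] E ∧ 0 < μ E), lpdim E

/-- Euclidean space `ℝ^m`. -/
abbrev Euc (m : ℕ) := EuclideanSpace ℝ (Fin m)

end ZPaper
open Filter MeasureTheory Set ZPaper
open scoped ENNReal NNReal Topology

/-!
`X = {0} ∪ ⋃ₖ Pₖ`, where `Pₖ ⊆ [2⁻ᵏ, 2·2⁻ᵏ]` consists of the numbers `2⁻ᵏ + ∑ εᵢ 2⁻ⁱ` whose
binary digits `εᵢ` vanish outside a set of free positions. Positions are grouped into epochs
`(2^{t²}, 2^{(t+1)²}]`. All positions up to `2^{(k+1)²}` are free for `Pₖ`; after that only the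
odd ones, and none at all during the epochs `t` with `v₂(t) = k`.

At the end of such an epoch `Pₖ` has only `2^{t²}` free digits among the first `2^{(t+1)²}`, so
`lbdim Pₖ = 0` and hence `lpdim X = 0`. At scale `2⁻ʲ` the piece of index `epoch j ≈ √(log j)` is
still completely free, so `lbdim X = 1`. A finite union of pieces has at most `j/2 + O(1)` free
digits up to `j`, so `dpdim X ≤ 1/2`. Conversely, by Baire category some member of an
increasing cover of `X` is dense in a cylinder of each of `P₀, P₁, P₂`, and in any two
consecutive epochs one of these three pieces never dips, so it keeps half of its digits free:
`dpdim X ≥ 1/2`.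
-/

lemma isCompact_insert_iUnion_of_tendsto_smallSets {X : Type*} [TopologicalSpace X] {x : X}
    {K : ℕ → Set X} (hK : ∀ n, IsCompact (K n)) (hx : Tendsto K atTop (𝓝 x).smallSets) :
    IsCompact (insert x (⋃ n, K n)) := by
  intro l hne hle
  by_cases hxl : ClusterPt x l
  · exact ⟨x, mem_insert x _, hxl⟩
  simp only [clusterPt_iff_nonempty, not_forall, ← not_disjoint_iff_nonempty_inter,
    not_not] at hxl
  obtain ⟨s, hs, t, ht, hst⟩ := hxl
  obtain ⟨N, hN⟩ := eventually_atTop.1 (tendsto_smallSets_iff.1 hx s hs)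
  have hfin : ⋃ n ∈ Finset.range N, K n ∈ l := by
    filter_upwards [ht, le_principal_iff.1 hle] with y hyt hy
    rcases hy with rfl | hy
    · exact absurd hyt (Set.disjoint_left.1 hst (mem_of_mem_nhds hs))
    obtain ⟨n, hn⟩ := mem_iUnion.1 hy
    refine mem_biUnion (Finset.mem_range.2 (not_le.1 fun h => ?_)) hn
    exact Set.disjoint_left.1 hst (hN n h hn) hyt
  obtain ⟨y, hy, hyl⟩ :=
    (Finset.range N).isCompact_biUnion (fun n _ => hK n) (le_principal_iff.2 hfin)
  obtain ⟨n, -, hn⟩ := mem_iUnion₂.1 hy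
  exact ⟨y, mem_insert_of_mem x (mem_iUnion_of_mem n hn), hyl⟩

lemma exists_inter_ball_subset_closure {X : Type*} [MetricSpace X] {K : Set X}
    (hK : IsCompact K) (hne : K.Nonempty) {A : ℕ → Set X} (hcov : K ⊆ ⋃ n, A n) :
    ∃ n, ∃ x ∈ K, ∃ r > 0, K ∩ Metric.ball x r ⊆ closure (A n) := by
  have : CompactSpace K := isCompact_iff_compactSpace.1 hK
  have : Nonempty K := hne.to_subtype
  obtain ⟨n, y, hy⟩ := nonempty_interior_of_iUnion_of_closed
    (f := fun n => ((↑) : K → X) ⁻¹' closure (A n))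
    (fun n => isClosed_closure.preimage continuous_subtype_val)
    (eq_univ_of_forall fun y => mem_iUnion.2 <| (mem_iUnion.1 (hcov y.2)).imp fun _ h =>
      subset_closure h)
  obtain ⟨r, hr, hball⟩ := Metric.mem_nhds_iff.1 (mem_interior_iff_mem_nhds.1 hy)
  exact ⟨n, y, y.2, r, hr, fun z ⟨hzK, hz⟩ => hball (show (⟨z, hzK⟩ : K) ∈ _ from hz)⟩

namespace ZPaper

section Capacity

variable {X : Type*} [MetricSpace X] {δ δ' : ℝ} {E E' : Set X}

lemma card_le_capacity (F : Finset X) (hF : ↑F ⊆ E)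
    (hsep : ∀ x ∈ F, ∀ y ∈ F, x ≠ y → δ < dist x y) : (F.card : ℝ≥0∞) ≤ capacity δ E :=
  le_iSup₂ (f := fun (F : Finset X) (_ : ↑F ⊆ E ∧ ∀ x ∈ F, ∀ y ∈ F, x ≠ y → δ < dist x y) =>
    (F.card : ℝ≥0∞)) F ⟨hF, hsep⟩

lemma capacity_le {c : ℝ≥0∞}
    (h : ∀ F : Finset X, ↑F ⊆ E → (∀ x ∈ F, ∀ y ∈ F, x ≠ y → δ < dist x y) → (F.card : ℝ≥0∞) ≤ c) :
    capacity δ E ≤ c :=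
  iSup₂_le fun F hF => h F hF.1 hF.2

lemma capacity_anti (h : δ ≤ δ') : capacity δ' E ≤ capacity δ E :=
  capacity_le fun F hF hsep =>
    card_le_capacity F hF fun x hx y hy hxy => h.trans_lt (hsep x hx y hy hxy)

lemma one_le_capacity (hE : E.Nonempty) : 1 ≤ capacity δ E := by
  obtain ⟨x, hx⟩ := hE
  simpa using card_le_capacity (δ := δ) {x} (by simpa using hx) (by simp)

lemma capacity_singleton_le_one (x : X) : capacity δ {x} ≤ 1 :=
  capacity_le fun F hF _ => by
    have : F.card ≤ 1 := Finset.card_le_one.2 fun a ha b hb => (hF ha).trans (hF hb).symm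
    exact_mod_cast this

lemma capacity_union_le : capacity δ (E ∪ E') ≤ capacity δ E + capacity δ E' := by
  classical
  refine capacity_le fun F hF hsep => ?_
  have hsub : ∀ (p : X → Prop) [DecidablePred p],
      ∀ x ∈ F.filter p, ∀ y ∈ F.filter p, x ≠ y → δ < dist x y :=
    fun p _ x hx y hy => hsep x (Finset.mem_of_mem_filter x hx) y (Finset.mem_of_mem_filter y hy)
  have hin : ↑(F.filter (· ∈ E)) ⊆ E := fun x hx => (Finset.mem_filter.1 hx).2
  have hout : ↑(F.filter (· ∉ E)) ⊆ E' := fun x hx =>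
    (hF (Finset.mem_filter.1 hx).1).resolve_left (Finset.mem_filter.1 hx).2
  calc (F.card : ℝ≥0∞) = (F.filter (· ∈ E)).card + (F.filter (· ∉ E)).card := by
        exact_mod_cast (Finset.card_filter_add_card_filter_not _).symm
    _ ≤ capacity δ E + capacity δ E' :=
        add_le_add (card_le_capacity _ hin (hsub _)) (card_le_capacity _ hout (hsub _))

lemma capacity_biUnion_le {ι : Type*} (s : Finset ι) (A : ι → Set X) :
    capacity δ (⋃ i ∈ s, A i) ≤ ∑ i ∈ s, capacity δ (A i) := by
  classical
  induction s using Finset.induction_on with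
  | empty =>
    refine capacity_le fun F hF _ => ?_
    simp only [Finset.notMem_empty, Set.iUnion_of_empty, Set.iUnion_empty, Set.subset_empty_iff,
      Finset.coe_eq_empty] at hF
    simp [hF]
  | insert a s ha ih =>
    rw [Finset.set_biUnion_insert, Finset.sum_insert ha]
    exact capacity_union_le.trans (add_le_add le_rfl ih)

/-- Points `2δ`-apart in the closure of `E` can be moved into `E` keeping them `δ`-apart. -/
lemma card_le_capacity_of_subset_closure (hδ : 0 < δ) (F : Finset X) (hF : ↑F ⊆ closure E)
    (hsep : ∀ x ∈ F, ∀ y ∈ F, x ≠ y → 2 * δ ≤ dist x y) : (F.card : ℝ≥0∞) ≤ capacity δ E := by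
  classical
  choose! g hgE hgx using fun x (hx : x ∈ F) =>
    Metric.mem_closure_iff.1 (hF hx) (δ / 2) (half_pos hδ)
  have hfar : ∀ x ∈ F, ∀ y ∈ F, x ≠ y → δ < dist (g x) (g y) := fun x hx y hy hxy => by
    have := dist_triangle4 x (g x) (g y) y
    linarith [hsep x hx y hy hxy, hgx x hx, dist_comm y (g y) ▸ hgx y hy]
  have hinj : Set.InjOn g F := fun x hx y hy hg => by
    by_contra hxy
    have := hfar x hx y hy hxy
    rw [hg, dist_self] at this
    linarith
  rw [← Finset.card_image_of_injOn hinj]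
  refine card_le_capacity _ (by simpa [Set.subset_def] using fun x hx => hgE x hx) ?_
  simp only [Finset.mem_image]
  rintro _ ⟨x, hx, rfl⟩ _ ⟨y, hy, rfl⟩ hne
  exact hfar x hx y hy fun h => hne (h ▸ rfl)

end Capacity

lemma capacity_le_of_subset_Icc {δ a b : ℝ} (hδ : 0 < δ) {E : Set ℝ} (hE : E ⊆ Icc a b) :
    capacity δ E ≤ ((⌊(b - a) / δ⌋₊ + 1 : ℕ) : ℝ≥0∞) := by
  refine capacity_le fun F hF hsep => ?_
  have hmaps : ∀ x ∈ F, ⌊(x - a) / δ⌋₊ ∈ Finset.range (⌊(b - a) / δ⌋₊ + 1) := fun x hx => by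
    rw [Finset.mem_range, Nat.lt_succ_iff]
    exact Nat.floor_le_floor (by gcongr; exact (hE (hF hx)).2)
  have hinj : Set.InjOn (fun x => ⌊(x - a) / δ⌋₊) F := fun x hx y hy hxy => by
    by_contra hne
    have hxa := div_nonneg (sub_nonneg.2 (hE (hF hx)).1) hδ.le
    have hya := div_nonneg (sub_nonneg.2 (hE (hF hy)).1) hδ.le
    have h1 := Nat.floor_le hxa
    have h2 := Nat.floor_le hya
    have h3 := Nat.lt_floor_add_one ((x - a) / δ)
    have h4 := Nat.lt_floor_add_one ((y - a) / δ)
    simp only at hxy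
    rw [hxy] at h1 h3
    have key : |(x - a) / δ - (y - a) / δ| < 1 := abs_sub_lt_iff.2 ⟨by linarith, by linarith⟩
    rw [← sub_div, abs_div, abs_of_pos hδ, div_lt_one hδ, sub_sub_sub_cancel_right] at key
    exact (hsep x hx y hy hne).not_gt (by rwa [Real.dist_eq])
  exact_mod_cast (Finset.card_range _).symm ▸ Finset.card_le_card_of_injOn _ hmaps hinj

noncomputable def dyadic (j : ℕ) : ℝ := (1 / 2 : ℝ) ^ j

lemma dyadic_pos (j : ℕ) : 0 < dyadic j := by unfold dyadic; positivity

lemma dyadic_anti {i j : ℕ} (h : i ≤ j) : dyadic j ≤ dyadic i :=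
  pow_le_pow_of_le_one (by norm_num) (by norm_num) h

lemma dyadic_succ (j : ℕ) : dyadic (j + 1) = dyadic j / 2 := by
  rw [dyadic, dyadic, pow_succ]; ring

lemma tendsto_dyadic : Tendsto dyadic atTop (𝓝[>] 0) :=
  tendsto_nhdsWithin_iff.2 ⟨tendsto_pow_atTop_nhds_zero_of_lt_one (by norm_num) (by norm_num),
    .of_forall dyadic_pos⟩

lemma dyadic_mul_two_pow (t : ℕ) : dyadic t * 2 ^ t = 1 := by
  rw [dyadic, ← mul_pow]; norm_num

lemma eventually_dyadic_lt {z : ℝ} (hz : 0 < z) : ∀ᶠ t in atTop, dyadic t < z :=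
  (tendsto_order.1 (tendsto_nhds_of_tendsto_nhdsWithin tendsto_dyadic)).2 z hz

lemma abs_log_dyadic (j : ℕ) : |Real.log (dyadic j)| = j * Real.log 2 := by
  rw [dyadic, one_div, inv_pow, Real.log_inv, Real.log_pow, abs_neg,
    abs_of_nonneg (by positivity)]

/-- The index `j` with `dyadic (j + 1) < δ ≤ dyadic j` (for `0 < δ ≤ 1`). -/
noncomputable def dyadicIndex (δ : ℝ) : ℕ := ⌊Real.logb 2 δ⁻¹⌋₊

lemma tendsto_dyadicIndex : Tendsto dyadicIndex (𝓝[>] 0) atTop :=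
  tendsto_nat_floor_atTop.comp
    ((Real.tendsto_logb_atTop (by norm_num)).comp tendsto_inv_nhdsGT_zero)

lemma le_dyadic_dyadicIndex {δ : ℝ} (h0 : 0 < δ) (h1 : δ ≤ 1) : δ ≤ dyadic (dyadicIndex δ) := by
  have hlog : 0 ≤ Real.logb 2 δ⁻¹ := Real.logb_nonneg (by norm_num) (one_le_inv_iff₀.2 ⟨h0, h1⟩)
  have hpow : (2 : ℝ) ^ dyadicIndex δ ≤ δ⁻¹ := by
    rw [← Real.rpow_natCast, ← Real.rpow_logb (b := 2) (by norm_num) (by norm_num) (inv_pos.2 h0)]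
    exact Real.rpow_le_rpow_of_exponent_le (by norm_num) (Nat.floor_le hlog)
  rw [dyadic, one_div, inv_pow]
  exact le_inv_of_le_inv₀ (by positivity) hpow

lemma abs_log_le_dyadicIndex {δ : ℝ} (h0 : 0 < δ) (h1 : δ < 1) :
    |Real.log δ| ≤ (dyadicIndex δ + 1) * Real.log 2 := by
  rw [abs_of_neg (Real.log_neg h0 h1), ← Real.log_inv,
    ← div_mul_cancel₀ (Real.log δ⁻¹) (Real.log_pos one_lt_two).ne', ← Real.logb]
  exact mul_le_mul_of_nonneg_right (Nat.lt_floor_add_one _).le (Real.log_nonneg one_le_two)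

lemma log_two_pow (m : ℕ) : ENNReal.log ((2 : ℝ≥0∞) ^ m) = ((m * Real.log 2 : ℝ) : EReal) := by
  rw [ENNReal.log_pow, ENNReal.log_pos_real (by norm_num) (by norm_num)]
  norm_num

variable {X : Type*} [MetricSpace X]

lemma lbdim_nonneg {E : Set X} (hE : E.Nonempty) : 0 ≤ lbdim E := by
  refine le_liminf_of_le (by isBoundedDefault) (Eventually.of_forall fun δ => ?_)
  exact EReal.div_nonneg (ENNReal.zero_le_log_iff.2 (one_le_capacity hE))
    (EReal.coe_nonneg.2 (abs_nonneg _))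

lemma le_lbdim_of_pow_le_capacity (E : Set X) (β : ℝ) (m : ℕ → ℕ)
    (hcap : ∀ᶠ j in atTop, (2 : ℝ≥0∞) ^ m j ≤ capacity (dyadic (j + 1)) E)
    (hm : ∀ z < β, ∀ᶠ j in atTop, z * (j + 2) ≤ m j) : (β : EReal) ≤ lbdim E := by
  refine EReal.ge_of_forall_gt_iff_ge.1 fun z hz => ?_
  obtain ⟨J, hJ⟩ := eventually_atTop.1 (hcap.and (hm z (EReal.coe_lt_coe_iff.1 hz)))
  refine le_liminf_of_le (by isBoundedDefault) ?_
  filter_upwards [Ioo_mem_nhdsGT (zero_lt_one' ℝ),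
    tendsto_dyadicIndex.eventually (eventually_ge_atTop (J + 1))] with δ ⟨hδ0, hδ1⟩ hJδ
  obtain ⟨j, hj⟩ : ∃ j, dyadicIndex δ = j + 1 := ⟨dyadicIndex δ - 1, by omega⟩
  obtain ⟨hc, hmj⟩ := hJ j (by omega)
  have hlog : 0 < |Real.log δ| := abs_pos.2 (Real.log_neg hδ0 hδ1).ne
  have hreal : z * |Real.log δ| ≤ m j * Real.log 2 := by
    have hlog2 : 0 < Real.log 2 := Real.log_pos one_lt_two
    have hδj := abs_log_le_dyadicIndex hδ0 hδ1
    rw [hj, Nat.cast_succ, add_assoc, one_add_one_eq_two] at hδj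
    rcases le_or_gt z 0 with hz0 | hz0
    · nlinarith [mul_nonpos_of_nonpos_of_nonneg hz0 hlog.le]
    · calc z * |Real.log δ| ≤ z * ((j + 2) * Real.log 2) := mul_le_mul_of_nonneg_left hδj hz0.le
        _ ≤ m j * Real.log 2 := by rw [← mul_assoc]; gcongr
  rw [EReal.le_div_iff_mul_le (EReal.coe_pos.2 hlog) (EReal.coe_ne_top _), ← EReal.coe_mul]
  refine (EReal.coe_le_coe_iff.2 hreal).trans ?_
  rw [← log_two_pow]
  refine ENNReal.log_monotone (hc.trans (capacity_anti ?_))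
  rw [← hj]
  exact le_dyadic_dyadicIndex hδ0 hδ1.le

lemma lbdim_le_of_capacity_le_pow (E : Set X) (β : ℝ) (b : ℕ → ℕ)
    (H : ∀ z > β, ∃ᶠ j in atTop, capacity (dyadic j) E ≤ 2 ^ b j ∧ (b j : ℝ) ≤ z * j) :
    lbdim E ≤ β := by
  refine EReal.le_of_forall_lt_iff_le.1 fun z hz => liminf_le_of_frequently_le' ?_
  refine tendsto_dyadic.frequently
    (((H z (EReal.coe_lt_coe_iff.1 hz)).and_eventually (eventually_ge_atTop 1)).mono ?_)
  rintro j ⟨⟨hcap, hb⟩, hj⟩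
  have hden : 0 < (j : ℝ) * Real.log 2 := by
    have : (1 : ℝ) ≤ j := by exact_mod_cast hj
    have := Real.log_pos one_lt_two
    positivity
  rw [abs_log_dyadic, EReal.div_le_iff_le_mul (EReal.coe_pos.2 hden) (EReal.coe_ne_top _),
    ← EReal.coe_mul]
  refine (ENNReal.log_monotone hcap).trans ?_
  rw [log_two_pow, EReal.coe_le_coe_iff]
  nlinarith [Real.log_pos one_lt_two]

lemma lpdim_le_of_subset_iUnion {E : Set X} (A : ℕ → Set X) (hA : E ⊆ ⋃ n, A n) {c : EReal}
    (h : ∀ n, lbdim (A n) ≤ c) : lpdim E ≤ c :=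
  iInf₂_le_of_le A hA (iSup_le h)

lemma lpdim_nonneg {E : Set X} (hE : E.Nonempty) : 0 ≤ lpdim E := by
  refine le_iInf₂ fun A hA => ?_
  obtain ⟨x, hx⟩ := hE
  obtain ⟨n, hn⟩ := mem_iUnion.1 (hA hx)
  exact (lbdim_nonneg ⟨x, hn⟩).trans (le_iSup (fun n => lbdim (A n)) n)

lemma dpdim_le_of_monotone {E : Set X} (A : ℕ → Set X) (hmono : Monotone A)
    (hA : ⋃ n, A n = E) {c : EReal} (h : ∀ n, lbdim (A n) ≤ c) : dpdim E ≤ c :=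
  iInf₂_le_of_le A ⟨hmono, hA⟩ (iSup_le h)

lemma le_dpdim {E : Set X} {c : EReal}
    (h : ∀ A : ℕ → Set X, Monotone A → ⋃ n, A n = E → ∃ n, c ≤ lbdim (A n)) : c ≤ dpdim E :=
  le_iInf₂ fun A hA => (h A hA.1 hA.2).elim fun n hn => hn.trans (le_iSup (fun n => lbdim (A n)) n)

end ZPaper

namespace DimensionGap

noncomputable def binaryValue (ε : ℕ → Bool) : ℝ := ∑' i, if ε i then dyadic i else 0

lemma summable_dyadic : Summable dyadic :=
  summable_geometric_of_lt_one (by norm_num) (by norm_num)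

lemma binaryDigit_mem_Icc (b : Bool) (i : ℕ) : (if b then dyadic i else 0) ∈ Icc 0 (dyadic i) := by
  cases b <;> simp [(dyadic_pos i).le]

lemma summable_binaryValue (ε : ℕ → Bool) : Summable fun i => if ε i then dyadic i else 0 :=
  .of_nonneg_of_le (fun i => (binaryDigit_mem_Icc _ i).1) (fun i => (binaryDigit_mem_Icc _ i).2)
    summable_dyadic

lemma binaryValue_false : binaryValue (fun _ => false) = 0 := by simp [binaryValue]

lemma tsum_dyadic_add_succ (d : ℕ) : ∑' i, dyadic (i + (d + 1)) = dyadic d := by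
  simp_rw [dyadic, pow_add, tsum_mul_right, tsum_geometric_two, pow_succ]
  ring

lemma abs_binaryValue_sub_le {ε ε' : ℕ → Bool} {d : ℕ} (h : ∀ i ≤ d, ε i = ε' i) :
    |binaryValue ε - binaryValue ε'| ≤ dyadic d := by
  have htail : ∀ ε : ℕ → Bool, ∑' i, (if ε (i + (d + 1)) then dyadic (i + (d + 1)) else 0) ∈
      Icc 0 (dyadic d) := fun ε => by
    rw [← tsum_dyadic_add_succ d]
    exact ⟨tsum_nonneg fun i => (binaryDigit_mem_Icc _ _).1,
      ((summable_nat_add_iff _).2 (summable_binaryValue ε)).tsum_le_tsum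
        (fun i => (binaryDigit_mem_Icc _ _).2) ((summable_nat_add_iff _).2 summable_dyadic)⟩
  have hhead : ∑ i ∈ Finset.range (d + 1), (if ε i then dyadic i else 0) =
      ∑ i ∈ Finset.range (d + 1), (if ε' i then dyadic i else 0) :=
    Finset.sum_congr rfl fun i hi => by rw [h i (Nat.lt_succ_iff.1 (Finset.mem_range.1 hi))]
  rw [binaryValue, binaryValue, ← (summable_binaryValue ε).sum_add_tsum_nat_add (d + 1),
    ← (summable_binaryValue ε').sum_add_tsum_nat_add (d + 1), hhead, add_sub_add_left_eq_sub,
    abs_sub_le_iff]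
  obtain ⟨h1, h2⟩ := htail ε
  obtain ⟨h1', h2'⟩ := htail ε'
  constructor <;> linarith

lemma binaryValue_mem_Icc {ε : ℕ → Bool} {d : ℕ} (h : ∀ i, ε i = true → d < i) :
    binaryValue ε ∈ Icc 0 (dyadic d) := by
  have := abs_binaryValue_sub_le (ε' := fun _ => false) (d := d) fun i hi =>
    Bool.eq_false_iff.2 fun hε => (h i hε).not_ge hi
  rw [binaryValue_false, sub_zero] at this
  exact ⟨tsum_nonneg fun i => (binaryDigit_mem_Icc _ i).1, (le_abs_self _).trans this⟩

lemma continuous_binaryValue : Continuous binaryValue :=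
  continuous_tsum (fun i => (continuous_of_discreteTopology
    (f := fun b : Bool => if b then dyadic i else 0)).comp (continuous_apply i))
    summable_dyadic fun i ε => by
      rw [Real.norm_eq_abs, abs_of_nonneg (binaryDigit_mem_Icc _ i).1]
      exact (binaryDigit_mem_Icc _ i).2

lemma binaryValue_splice (ε : ℕ → Bool) {d : ℕ} {G : Finset ℕ} (hG : ∀ i ∈ G, d < i) :
    binaryValue (fun i => if i ≤ d then ε i else decide (i ∈ G)) =
      binaryValue (fun i => ε i && decide (i ≤ d)) + ∑ i ∈ G, dyadic i := by
  have hpt : ∀ i, (if (if i ≤ d then ε i else decide (i ∈ G)) then dyadic i else 0) =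
      (if (ε i && decide (i ≤ d)) then dyadic i else 0) + (if i ∈ G then dyadic i else 0) := by
    intro i
    by_cases hid : i ≤ d
    · have hiG : i ∉ G := fun hi => (hG i hi).not_ge hid
      simp [hid, hiG]
    · by_cases hiG : i ∈ G <;> simp [hid, hiG]
  have hfin : Summable fun i => if i ∈ G then dyadic i else 0 :=
    summable_of_ne_finset_zero (s := G) fun i hi => by simp [hi]
  rw [binaryValue, binaryValue, tsum_congr hpt, (summable_binaryValue _).tsum_add hfin]
  congr 1
  rw [tsum_eq_sum (s := G) fun i hi => if_neg hi, Finset.sum_ite_mem, Finset.inter_self]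

lemma sum_dyadic_eq_mul {m : ℕ} {G : Finset ℕ} (hG : ∀ i ∈ G, i ≤ m) :
    ∑ i ∈ G, dyadic i = dyadic m * ((∑ i ∈ G, 2 ^ (m - i) : ℕ) : ℝ) := by
  push_cast
  rw [Finset.mul_sum]
  refine Finset.sum_congr rfl fun i hi => ?_
  obtain ⟨n, rfl⟩ := Nat.exists_eq_add_of_le (hG i hi)
  rw [dyadic, dyadic, Nat.add_sub_cancel_left, pow_add, mul_assoc, ← mul_pow]
  norm_num

/-- The two sums are distinct multiples of `dyadic m`, by uniqueness of binary expansions. -/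
lemma dyadic_le_abs_sum_sub_sum {m : ℕ} {G G' : Finset ℕ} (hG : ∀ i ∈ G, i ≤ m)
    (hG' : ∀ i ∈ G', i ≤ m) (hne : G ≠ G') :
    dyadic m ≤ |∑ i ∈ G, dyadic i - ∑ i ∈ G', dyadic i| := by
  have hrefl : ∀ H : Finset ℕ, (∀ i ∈ H, i ≤ m) →
      (H.image (m - ·)).image (m - ·) = H ∧ ∑ i ∈ H.image (m - ·), 2 ^ i = ∑ i ∈ H, 2 ^ (m - i) :=
    fun H hH => ⟨by
      rw [Finset.image_image]
      exact (Finset.image_congr fun i hi => by have := hH i hi; show m - (m - i) = i; omega).trans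
        Finset.image_id',
      Finset.sum_image fun i hi j hj (hij : m - i = m - j) => by
        have := hH i hi; have := hH j hj; omega⟩
  have hcode : (∑ i ∈ G, 2 ^ (m - i) : ℕ) ≠ ∑ i ∈ G', 2 ^ (m - i) := fun h => hne <| by
    rw [← (hrefl G hG).1, ← (hrefl G' hG').1,
      Finset.geomSum_injective le_rfl (((hrefl G hG).2.trans h).trans (hrefl G' hG').2.symm)]
  rw [sum_dyadic_eq_mul hG, sum_dyadic_eq_mul hG', ← mul_sub, abs_mul,
    abs_of_pos (dyadic_pos m)]
  refine le_mul_of_one_le_right (dyadic_pos m).le ?_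
  have := Int.one_le_abs (sub_ne_zero.2 (Int.ofNat_inj.not.2 hcode))
  exact_mod_cast this

def epochStart (t : ℕ) : ℕ := 2 ^ t ^ 2

lemma epochStart_strictMono : StrictMono epochStart := fun _ _ h =>
  Nat.pow_lt_pow_right one_lt_two (Nat.pow_lt_pow_left h two_ne_zero)

lemma epochStart_pos (t : ℕ) : 0 < epochStart t := Nat.two_pow_pos _

lemma lt_epochStart (t : ℕ) : t < epochStart t :=
  (Nat.lt_two_pow_self).trans_le (Nat.pow_le_pow_right two_pos (Nat.le_self_pow two_ne_zero t))

lemma epochStart_succ (t : ℕ) : epochStart (t + 1) = epochStart t * 2 ^ (2 * t + 1) := by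
  rw [epochStart, epochStart, ← pow_add]; ring_nf

/-- The epoch of `i ≥ 2`: the `t` with `epochStart t < i ≤ epochStart (t + 1)`. -/
def epoch (i : ℕ) : ℕ := Nat.sqrt (Nat.log 2 (i - 1))

lemma epochStart_epoch_lt {i : ℕ} (hi : 2 ≤ i) : epochStart (epoch i) < i := by
  have := Nat.pow_log_le_self 2 (show i - 1 ≠ 0 by omega)
  have := Nat.pow_le_pow_right two_pos (Nat.sqrt_le' (Nat.log 2 (i - 1)))
  rw [epochStart, epoch]
  omega

lemma le_epochStart_epoch_succ (i : ℕ) : i ≤ epochStart (epoch i + 1) := by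
  have := Nat.lt_pow_succ_log_self one_lt_two (i - 1)
  have := Nat.pow_le_pow_right two_pos (Nat.lt_succ_sqrt' (Nat.log 2 (i - 1)))
  simp only [Nat.succ_eq_add_one] at *
  rw [epochStart, epoch]
  omega

lemma le_epoch {t i : ℕ} (h : epochStart t < i) : t ≤ epoch i :=
  Nat.lt_succ_iff.1 <| epochStart_strictMono.lt_iff_lt.1 <| h.trans_le (le_epochStart_epoch_succ i)

lemma epoch_lt {t i : ℕ} (hi : 2 ≤ i) (h : i ≤ epochStart t) : epoch i < t :=
  epochStart_strictMono.lt_iff_lt.1 <| (epochStart_epoch_lt hi).trans_le h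

lemma epoch_eq {t i : ℕ} (h1 : epochStart t < i) (h2 : i ≤ epochStart (t + 1)) : epoch i = t :=
  le_antisymm (Nat.lt_succ_iff.1 (epoch_lt (by have := epochStart_pos t; omega) h2)) (le_epoch h1)

lemma epoch_le_log (i : ℕ) : epoch i ≤ Nat.log 2 i :=
  (Nat.sqrt_le_self _).trans (Nat.log_mono_right (Nat.sub_le i 1))

lemma tendsto_epoch : Tendsto epoch atTop atTop :=
  tendsto_atTop.2 fun t => eventually_atTop.2 ⟨epochStart t + 1, fun _ hi => le_epoch hi⟩

/-- The piece all of whose digits vanish during epoch `t`. -/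
def dipIndex (t : ℕ) : ℕ := padicValNat 2 t

lemma exists_dipIndex_eq (k N : ℕ) : ∃ t ≥ N, dipIndex t = k := by
  refine ⟨2 ^ k * (2 * N + 1), ?_, ?_⟩
  · nlinarith [Nat.one_le_two_pow (n := k)]
  · rw [dipIndex, padicValNat.mul (by positivity) (by omega), padicValNat.prime_pow,
      padicValNat.eq_zero_of_not_dvd (by omega), add_zero]

def FreeDigit (k i : ℕ) : Prop :=
  k < i ∧ (i ≤ epochStart (k + 1) ∨ (i % 2 = 1 ∧ dipIndex (epoch i) ≠ k))

instance (k : ℕ) : DecidablePred (FreeDigit k) := fun _ => by unfold FreeDigit; infer_instance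

def freeCount (k a b : ℕ) : ℕ := ((Finset.Ioc a b).filter (FreeDigit k)).card

lemma card_filter_odd_Ioc {a b : ℕ} (h : a ≤ b) :
    ((Finset.Ioc a b).filter (· % 2 = 1)).card = (b + 1) / 2 - (a + 1) / 2 := by
  induction b, h using Nat.le_induction with
  | base => simp
  | succ b hab ih =>
    rw [← Finset.insert_Ioc_right_eq_Ioc_add_one (by omega), Finset.filter_insert]
    split_ifs with hb
    · rw [Finset.card_insert_of_notMem (by simp), ih]; omega
    · rw [ih]; omega

lemma freeCount_anti_left {k a a' b : ℕ} (h : a ≤ a') : freeCount k a' b ≤ freeCount k a b :=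
  Finset.card_le_card (Finset.filter_subset_filter _ (Finset.Ioc_subset_Ioc_left h))

lemma freeCount_le_add (k a b : ℕ) : freeCount k 0 b ≤ freeCount k a b + a := by
  calc freeCount k 0 b ≤ ((Finset.Ioc a b).filter (FreeDigit k) ∪ Finset.Ioc 0 a).card := by
        refine Finset.card_le_card fun i hi => ?_
        simp only [Finset.mem_union, Finset.mem_filter, Finset.mem_Ioc] at hi ⊢
        by_cases hia : a < i
        · exact Or.inl ⟨⟨hia, hi.1.2⟩, hi.2⟩
        · exact Or.inr ⟨hi.1.1, not_lt.1 hia⟩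
    _ ≤ freeCount k a b + a := (Finset.card_union_le _ _).trans (by simp [freeCount])

lemma sub_le_freeCount {k a b : ℕ} (hka : k ≤ a) (hb : b ≤ epochStart (k + 1)) :
    b - a ≤ freeCount k a b := by
  rw [← Nat.card_Ioc]
  refine Finset.card_le_card fun i hi => ?_
  rw [Finset.mem_Ioc] at hi
  exact Finset.mem_filter.2 ⟨Finset.mem_Ioc.2 hi, by omega, Or.inl (by omega)⟩

lemma freeCount_le_half (k j : ℕ) : freeCount k 0 j ≤ j / 2 + epochStart (k + 1) + 1 := by
  calc freeCount k 0 j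
      ≤ (Finset.Ioc 0 (epochStart (k + 1)) ∪ (Finset.Ioc 0 j).filter (· % 2 = 1)).card := by
        refine Finset.card_le_card fun i hi => ?_
        simp only [Finset.mem_union, Finset.mem_filter, Finset.mem_Ioc, FreeDigit] at hi ⊢
        omega
    _ ≤ epochStart (k + 1) + ((j + 1) / 2 - 1 / 2) := by
        rw [← card_filter_odd_Ioc (Nat.zero_le j)]
        exact (Finset.card_union_le _ _).trans (by simp)
    _ ≤ j / 2 + epochStart (k + 1) + 1 := by omega

lemma freeCount_le_of_dipIndex_eq {k t : ℕ} (hdip : dipIndex t = k) (hkt : k + 1 ≤ t) :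
    freeCount k 0 (epochStart (t + 1)) ≤ epochStart t := by
  calc freeCount k 0 (epochStart (t + 1)) ≤ (Finset.Ioc 0 (epochStart t)).card := by
        refine Finset.card_le_card fun i hi => ?_
        simp only [Finset.mem_filter, Finset.mem_Ioc, FreeDigit] at hi ⊢
        refine ⟨hi.1.1, not_lt.1 fun hti => ?_⟩
        have := epochStart_strictMono.monotone hkt
        rw [epoch_eq hti hi.1.2] at hi
        omega
    _ = epochStart t := Nat.card_Ioc 0 _

lemma half_le_freeCount {k s j : ℕ} (hks : k + 1 ≤ s) (hj : j ≤ epochStart (s + 2))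
    (h0 : dipIndex s ≠ k) (h1 : dipIndex (s + 1) ≠ k) :
    (j - epochStart s) / 2 ≤ freeCount k (epochStart s) j := by
  rcases le_or_gt j (epochStart s) with hjs | hsj
  · simp [Nat.sub_eq_zero_of_le hjs]
  calc (j - epochStart s) / 2 ≤ ((Finset.Ioc (epochStart s) j).filter (· % 2 = 1)).card := by
        rw [card_filter_odd_Ioc hsj.le]; omega
    _ ≤ freeCount k (epochStart s) j := by
        refine Finset.card_le_card fun i hi => ?_
        simp only [Finset.mem_filter, Finset.mem_Ioc] at hi ⊢
        have hsi := le_epoch hi.1.1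
        have his := epoch_lt (by have := epochStart_pos s; omega) (hi.1.2.trans hj)
        have := lt_epochStart s
        refine ⟨hi.1, by omega, Or.inr ⟨hi.2, ?_⟩⟩
        obtain h | h : epoch i = s ∨ epoch i = s + 1 := by omega
        all_goals rw [h]; assumption

lemma exists_le_two_ne (a b : ℕ) : ∃ k ≤ 2, k ≠ a ∧ k ≠ b := by
  by_cases h0 : a ≠ 0 ∧ b ≠ 0
  · exact ⟨0, by omega, Ne.symm h0.1, Ne.symm h0.2⟩
  by_cases h1 : a ≠ 1 ∧ b ≠ 1
  · exact ⟨1, by omega, Ne.symm h1.1, Ne.symm h1.2⟩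
  exact ⟨2, le_rfl, by omega, by omega⟩

def piece (k : ℕ) : Set ℝ :=
  (fun ε => dyadic k + binaryValue ε) '' {ε | ∀ i, ε i = true → FreeDigit k i}

def exampleSet : Set ℝ := insert 0 (⋃ k, piece k)

lemma isCompact_piece (k : ℕ) : IsCompact (piece k) := by
  have hclosed : IsClosed {ε : ℕ → Bool | ∀ i, ε i = true → FreeDigit k i} := by
    rw [ofPred_forall]
    exact isClosed_iInter fun i => IsClosed.preimage (f := fun ε : ℕ → Bool => ε i)
      (continuous_apply i) (isClosed_discrete {b : Bool | b = true → FreeDigit k i})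
  exact hclosed.isCompact.image (continuous_const.add continuous_binaryValue)

lemma piece_subset_Icc (k : ℕ) : piece k ⊆ Icc (dyadic k) (dyadic k + dyadic k) := by
  rintro _ ⟨ε, hε, rfl⟩
  have := binaryValue_mem_Icc fun i hi => (hε i hi).1
  exact ⟨by linarith [this.1], by linarith [this.2]⟩

lemma tendsto_piece_smallSets : Tendsto piece atTop (𝓝 0).smallSets := by
  refine tendsto_smallSets_iff.2 fun t ht => ?_
  obtain ⟨r, hr, hball⟩ := Metric.mem_nhds_iff.1 ht
  filter_upwards [eventually_dyadic_lt (half_pos hr)] with k hk x hx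
  obtain ⟨h1, h2⟩ := piece_subset_Icc k hx
  have := dyadic_pos k
  exact hball (by rw [Metric.mem_ball, Real.dist_eq, sub_zero, abs_lt]; constructor <;> linarith)

lemma isCompact_exampleSet : IsCompact exampleSet :=
  isCompact_insert_iUnion_of_tendsto_smallSets isCompact_piece tendsto_piece_smallSets

lemma piece_subset_exampleSet (k : ℕ) : piece k ⊆ exampleSet :=
  (subset_iUnion piece k).trans (subset_insert 0 _)

lemma dyadic_mem_piece (k : ℕ) : dyadic k ∈ piece k :=
  ⟨fun _ => false, by simp, by simp [binaryValue_false]⟩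

lemma exampleSet_subset_Icc : exampleSet ⊆ Icc 0 2 := by
  refine insert_subset ⟨le_rfl, zero_le_two⟩ (iUnion_subset fun k x hx => ?_)
  obtain ⟨h1, h2⟩ := piece_subset_Icc k hx
  have := dyadic_pos k
  have : dyadic k ≤ dyadic 0 := dyadic_anti (Nat.zero_le k)
  have : dyadic 0 = 1 := pow_zero _
  exact ⟨by linarith, by linarith⟩

/-- A point of `piece k` is determined up to `dyadic j` by its free digits up to `j`. -/
lemma capacity_piece_le (k j : ℕ) :
    capacity (dyadic j) (piece k) ≤ 2 ^ freeCount k 0 j := by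
  classical
  refine capacity_le fun F hF hsep => ?_
  choose! e he hex using fun x (hx : x ∈ F) => hF hx
  set code : ℝ → Finset ℕ := fun x => (Finset.Ioc 0 j).filter (e x · = true)
  have hmaps : ∀ x ∈ F, code x ∈ ((Finset.Ioc 0 j).filter (FreeDigit k)).powerset :=
    fun x hx => Finset.mem_powerset.2 fun i hi => by
      simp only [code, Finset.mem_filter] at hi ⊢
      exact ⟨hi.1, he x hx i hi.2⟩
  have hinj : InjOn code F := fun x hx y hy hxy => by
    have hagree : ∀ i ≤ j, e x i = e y i := fun i hij => by
      rcases Nat.eq_zero_or_pos i with rfl | hi0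
      · rw [Bool.eq_false_iff.2 fun h => Nat.not_lt_zero k (he x hx 0 h).1,
          Bool.eq_false_iff.2 fun h => Nat.not_lt_zero k (he y hy 0 h).1]
      · have := congrArg (i ∈ ·) hxy
        simp only [code, Finset.mem_filter, Finset.mem_Ioc, hi0, hij, true_and, eq_iff_iff] at this
        exact Bool.eq_iff_iff.2 this
    by_contra hne
    have := abs_binaryValue_sub_le hagree
    rw [← add_sub_add_left_eq_sub _ _ (dyadic k), show dyadic k + _ = x from hex x hx,
      show dyadic k + _ = y from hex y hy, ← Real.dist_eq] at this
    exact (hsep x hx y hy hne).not_ge this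
  calc (F.card : ℝ≥0∞) ≤ (((Finset.Ioc 0 j).filter (FreeDigit k)).powerset.card : ℕ) := by
        exact_mod_cast Finset.card_le_card_of_injOn code hmaps hinj
    _ = 2 ^ freeCount k 0 j := by rw [Finset.card_powerset]; push_cast; rfl

/-- Prescribe the free digits in `(d, m]` arbitrarily. -/
lemma exists_separated_subset_cylinder (k d m : ℕ) {ε : ℕ → Bool}
    (hε : ∀ i, ε i = true → FreeDigit k i) :
    ∃ F : Finset ℝ, F.card = 2 ^ freeCount k d m ∧
      ↑F ⊆ piece k ∩ Metric.closedBall (dyadic k + binaryValue ε) (dyadic d) ∧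
      ∀ x ∈ F, ∀ y ∈ F, x ≠ y → dyadic m ≤ dist x y := by
  classical
  set P := (Finset.Ioc d m).filter (FreeDigit k)
  set point : Finset ℕ → ℝ := fun G =>
    dyadic k + binaryValue (fun i => if i ≤ d then ε i else decide (i ∈ G))
  have hP : ∀ G ∈ P.powerset, ∀ i ∈ G, (d < i ∧ i ≤ m) ∧ FreeDigit k i := fun G hG i hi => by
    simpa [P] using Finset.mem_powerset.1 hG hi
  have hsep : ∀ G ∈ P.powerset, ∀ G' ∈ P.powerset, G ≠ G' → dyadic m ≤ dist (point G) (point G') :=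
    fun G hG G' hG' hne => by
      rw [Real.dist_eq, add_sub_add_left_eq_sub,
        binaryValue_splice ε fun i hi => (hP G hG i hi).1.1,
        binaryValue_splice ε fun i hi => (hP G' hG' i hi).1.1, add_sub_add_left_eq_sub]
      exact dyadic_le_abs_sum_sub_sum (fun i hi => (hP G hG i hi).1.2)
        (fun i hi => (hP G' hG' i hi).1.2) hne
  have hinj : InjOn point P.powerset := fun G hG G' hG' h => by
    by_contra hne
    have := hsep G hG G' hG' hne
    rw [h, dist_self] at this
    exact (dyadic_pos m).not_ge this
  refine ⟨P.powerset.image point,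
    by rw [Finset.card_image_of_injOn hinj, Finset.card_powerset]; rfl, ?_, ?_⟩
  · simp only [Finset.coe_image, image_subset_iff]
    intro G hG
    refine ⟨⟨_, fun i hi => ?_, rfl⟩, ?_⟩
    · by_cases hid : i ≤ d
      · simp only [hid, if_true] at hi
        exact hε i hi
      · simp only [hid, if_false, decide_eq_true_eq] at hi
        exact (hP G hG i hi).2
    · rw [Metric.mem_closedBall, Real.dist_eq, add_sub_add_left_eq_sub]
      exact abs_binaryValue_sub_le fun i hi => if_pos hi
  · simp only [Finset.mem_image]
    rintro _ ⟨G, hG, rfl⟩ _ ⟨G', hG', rfl⟩ hne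
    exact hsep G hG G' hG' fun h => hne (h ▸ rfl)

def IsDenseInCylinder (E : Set ℝ) (k d : ℕ) : Prop :=
  ∃ ε : ℕ → Bool, (∀ i, ε i = true → FreeDigit k i) ∧
    piece k ∩ Metric.closedBall (dyadic k + binaryValue ε) (dyadic d) ⊆ closure E

lemma pow_freeCount_le_capacity {E : Set ℝ} {k d : ℕ} (hE : IsDenseInCylinder E k d) (j : ℕ) :
    2 ^ freeCount k d j ≤ capacity (dyadic (j + 1)) E := by
  obtain ⟨ε, hε, hE⟩ := hE
  obtain ⟨F, hcard, hF, hsep⟩ := exists_separated_subset_cylinder k d j hε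
  calc (2 : ℝ≥0∞) ^ freeCount k d j = F.card := by rw [hcard]; push_cast; rfl
    _ ≤ _ := ?_
  refine card_le_capacity_of_subset_closure (dyadic_pos _) F (hF.trans hE) fun x hx y hy hne => ?_
  rw [dyadic_succ, mul_div_cancel₀ _ two_ne_zero]
  exact hsep x hx y hy hne

lemma eventually_epoch_le_mul {ε : ℝ} (hε : 0 < ε) : ∀ᶠ j : ℕ in atTop, (epoch j : ℝ) ≤ ε * j := by
  have hlog2 := Real.log_pos one_lt_two
  filter_upwards [tendsto_natCast_atTop_atTop.eventually
    ((Real.isLittleO_log_id_atTop.bound (mul_pos hε hlog2)).and (eventually_ge_atTop 1))]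
    with j ⟨hj, hj1⟩
  rw [Real.norm_eq_abs, Real.norm_eq_abs, abs_of_nonneg (Real.log_nonneg hj1), id,
    abs_of_nonneg (by linarith)] at hj
  calc (epoch j : ℝ) ≤ Nat.log 2 j := by exact_mod_cast epoch_le_log j
    _ ≤ Real.logb 2 j := by exact_mod_cast Real.natLog_le_logb j 2
    _ ≤ ε * j := by rw [Real.logb, div_le_iff₀ hlog2]; linarith

/-- `epochStart (t - 1) ≤ dyadic (t - 1) * j` when `epochStart t < j`. -/
lemma eventually_epochStart_pred_epoch_le_mul {ε : ℝ} (hε : 0 < ε) :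
    ∀ᶠ j : ℕ in atTop, (epochStart (epoch j - 1) : ℝ) ≤ ε * j := by
  obtain ⟨T, hT⟩ := (eventually_dyadic_lt hε).exists_forall_of_atTop
  filter_upwards [tendsto_epoch.eventually (eventually_ge_atTop (T + 1)),
    eventually_ge_atTop 2] with j hTj hj
  obtain ⟨s, hs⟩ : ∃ s, epoch j = s + 1 := ⟨epoch j - 1, by omega⟩
  have hlt := epochStart_epoch_lt hj
  rw [hs, epochStart_succ] at hlt
  have hpow : epochStart s * 2 ^ s ≤ j :=
    (Nat.mul_le_mul_left _ (Nat.pow_le_pow_right two_pos (by omega))).trans hlt.le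
  have hcast : (epochStart s : ℝ) * 2 ^ s ≤ j := by exact_mod_cast hpow
  rw [hs, Nat.add_sub_cancel]
  calc (epochStart s : ℝ) = epochStart s * 2 ^ s * dyadic s := by
        rw [mul_assoc, mul_comm (2 ^ s : ℝ), dyadic_mul_two_pow, mul_one]
    _ ≤ j * ε := mul_le_mul hcast (hT s (by omega)).le (dyadic_pos s).le (Nat.cast_nonneg j)
    _ = ε * j := mul_comm _ _

lemma capacity_insert_zero_piece_le (k j : ℕ) :
    capacity (dyadic j) (insert 0 (piece k)) ≤ 2 ^ (freeCount k 0 j + 1) := by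
  rw [insert_eq, pow_succ, mul_two]
  exact capacity_union_le.trans (add_le_add ((capacity_singleton_le_one 0).trans
    (one_le_pow₀ one_le_two)) (capacity_piece_le k j))

lemma epochStart_add_one_le_mul {z : ℝ} {t : ℕ} (hz : dyadic t < z) :
    (epochStart t + 1 : ℝ) ≤ z * epochStart (t + 1) := by
  have hτ : (1 : ℝ) ≤ epochStart t := by exact_mod_cast epochStart_pos t
  have hz2 : 1 ≤ z * 2 ^ t := by
    nlinarith [dyadic_mul_two_pow t, pow_pos (two_pos (α := ℝ)) t]
  have h2t : (2 : ℝ) * 2 ^ t ≤ 2 ^ (2 * t + 1) := by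
    rw [pow_succ, mul_comm]; gcongr <;> [norm_num; omega]
  have hzpos : 0 < z := (dyadic_pos t).trans hz
  calc (epochStart t + 1 : ℝ) ≤ 2 * epochStart t * (z * 2 ^ t) := by nlinarith
    _ = z * epochStart t * (2 * 2 ^ t) := by ring
    _ ≤ z * epochStart t * 2 ^ (2 * t + 1) := by gcongr
    _ = z * epochStart (t + 1) := by rw [epochStart_succ]; push_cast; ring

/-- At the end of an epoch `t` in which piece `k` dips, it has only `epochStart t` free digits
among the first `epochStart (t + 1)`. -/
lemma lbdim_insert_zero_piece_le (k : ℕ) : lbdim (insert 0 (piece k)) ≤ 0 := by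
  refine lbdim_le_of_capacity_le_pow _ 0 (fun j => freeCount k 0 j + 1) fun z hz => ?_
  refine frequently_atTop.2 fun N => ?_
  obtain ⟨T, hT⟩ := (eventually_dyadic_lt hz).exists_forall_of_atTop
  obtain ⟨t, ht, hdip⟩ := exists_dipIndex_eq k (N + k + T + 1)
  refine ⟨epochStart (t + 1), (lt_epochStart (t + 1)).le.trans' (by omega),
    capacity_insert_zero_piece_le k _, ?_⟩
  have hfree : freeCount k 0 (epochStart (t + 1)) + 1 ≤ epochStart t + 1 :=
    Nat.add_le_add_right (freeCount_le_of_dipIndex_eq hdip (by omega)) 1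
  exact (Nat.cast_le.2 hfree).trans (by exact_mod_cast epochStart_add_one_le_mul (hT t (by omega)))

lemma lpdim_exampleSet : lpdim exampleSet = 0 := by
  refine le_antisymm (lpdim_le_of_subset_iUnion (fun k => insert 0 (piece k)) ?_
    lbdim_insert_zero_piece_le) (lpdim_nonneg ⟨0, mem_insert 0 _⟩)
  refine insert_subset (mem_iUnion.2 ⟨0, mem_insert 0 _⟩) (iUnion_subset fun k => ?_)
  exact (subset_insert 0 _).trans (subset_iUnion (fun k => insert 0 (piece k)) k)

lemma lbdim_exampleSet_le : lbdim exampleSet ≤ 1 := by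
  refine lbdim_le_of_capacity_le_pow _ 1 (fun j => j + 2) fun z hz => Eventually.frequently ?_
  filter_upwards [tendsto_natCast_atTop_atTop.eventually (eventually_ge_atTop (2 / (z - 1)))]
    with j hj
  refine ⟨(capacity_le_of_subset_Icc (dyadic_pos j) exampleSet_subset_Icc).trans ?_, ?_⟩
  · have h2 : (2 - 0) / dyadic j = ((2 ^ (j + 1) : ℕ) : ℝ) := by
      rw [sub_zero, dyadic, one_div, inv_pow, div_inv_eq_mul]
      push_cast
      ring
    rw [h2, Nat.floor_natCast]
    have : 2 ^ (j + 1) + 1 ≤ 2 ^ (j + 2) := by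
      rw [pow_succ 2 (j + 1)]
      have := Nat.one_le_two_pow (n := j + 1)
      omega
    exact_mod_cast this
  · rw [div_le_iff₀ (by linarith)] at hj
    push_cast
    linarith

/-- At scale `dyadic (j + 1)`, the piece of index `epoch j` still has all its digits in
`(epoch j, j]` free. -/
lemma one_le_lbdim_exampleSet : 1 ≤ lbdim exampleSet := by
  refine le_lbdim_of_pow_le_capacity _ 1 (fun j => j - epoch j) ?_ fun z hz => ?_
  · refine Eventually.of_forall fun j => ?_
    refine (pow_le_pow_right₀ one_le_two
      (sub_le_freeCount le_rfl (le_epochStart_epoch_succ j))).trans ?_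
    exact pow_freeCount_le_capacity ⟨fun _ => false, by simp,
      inter_subset_left.trans ((piece_subset_exampleSet _).trans subset_closure)⟩ j
  · filter_upwards [eventually_epoch_le_mul (half_pos (sub_pos.2 hz)),
      tendsto_natCast_atTop_atTop.eventually (eventually_ge_atTop (4 * z / (1 - z)))] with j hj hj'
    have hle : epoch j ≤ j := (epoch_le_log j).trans (Nat.log_le_self 2 j)
    rw [div_le_iff₀ (by linarith)] at hj'
    rw [Nat.cast_sub hle]
    nlinarith

lemma lbdim_exampleSet : lbdim exampleSet = 1 :=
  le_antisymm lbdim_exampleSet_le one_le_lbdim_exampleSet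

def truncation (n : ℕ) : Set ℝ := insert 0 (⋃ k ∈ Finset.range n, piece k)

lemma truncation_monotone : Monotone truncation := fun _ _ h =>
  insert_subset_insert (biUnion_subset_biUnion_left fun _ hk =>
    Finset.mem_range.2 ((Finset.mem_range.1 hk).trans_le h))

lemma iUnion_truncation : ⋃ n, truncation n = exampleSet := by
  refine (iUnion_subset fun n => insert_subset_insert
    (iUnion₂_subset fun k _ => subset_iUnion piece k)).antisymm ?_
  refine insert_subset (mem_iUnion.2 ⟨0, mem_insert 0 _⟩) (iUnion_subset fun k => ?_)
  exact (subset_biUnion_of_mem (u := piece) (Finset.mem_range.2 k.lt_succ_self)).trans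
    ((subset_insert 0 _).trans (subset_iUnion truncation (k + 1)))

lemma capacity_truncation_le (n j : ℕ) :
    capacity (dyadic j) (truncation n) ≤ 2 ^ (j / 2 + epochStart n + 1 + n) := by
  set s := j / 2 + epochStart n + 1
  have hpiece : ∀ k ∈ Finset.range n, capacity (dyadic j) (piece k) ≤ 2 ^ s := fun k hk => by
    refine (capacity_piece_le k j).trans (pow_le_pow_right₀ one_le_two ?_)
    have : epochStart (k + 1) ≤ epochStart n :=
      epochStart_strictMono.monotone (Finset.mem_range.1 hk)
    have := freeCount_le_half k j
    omega
  calc capacity (dyadic j) (truncation n)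
      ≤ 1 + ∑ k ∈ Finset.range n, capacity (dyadic j) (piece k) :=
        capacity_union_le.trans (add_le_add (capacity_singleton_le_one 0) (capacity_biUnion_le _ _))
    _ ≤ 2 ^ s + ∑ k ∈ Finset.range n, (2 : ℝ≥0∞) ^ s :=
        add_le_add (one_le_pow₀ one_le_two) (Finset.sum_le_sum hpiece)
    _ = (n + 1 : ℕ) * 2 ^ s := by simp [add_mul, add_comm]
    _ ≤ (2 ^ n : ℕ) * 2 ^ s := by gcongr; exact Nat.lt_two_pow_self
    _ = 2 ^ (s + n) := by push_cast; rw [← pow_add, add_comm]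

lemma lbdim_truncation_le (n : ℕ) : lbdim (truncation n) ≤ (1 / 2 : ℝ) := by
  refine lbdim_le_of_capacity_le_pow _ _ (fun j => j / 2 + epochStart n + 1 + n)
    fun z hz => Eventually.frequently ?_
  filter_upwards [tendsto_natCast_atTop_atTop.eventually
    (eventually_ge_atTop ((epochStart n + 1 + n) / (z - 1 / 2)))] with j hj
  refine ⟨capacity_truncation_le n j, ?_⟩
  rw [div_le_iff₀ (by linarith)] at hj
  have : ((j / 2 : ℕ) : ℝ) ≤ j / 2 := Nat.cast_div_le
  push_cast
  linarith

lemma dpdim_exampleSet_le : dpdim exampleSet ≤ (1 / 2 : ℝ) :=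
  dpdim_le_of_monotone truncation truncation_monotone iUnion_truncation lbdim_truncation_le

lemma exists_cylinders_subset_closure {A : ℕ → Set ℝ} (hmono : Monotone A)
    (hA : exampleSet ⊆ ⋃ n, A n) :
    ∃ n d, ∀ k ≤ 2, IsDenseInCylinder (A n) k d := by
  choose n x hx r hr hsub using fun k => exists_inter_ball_subset_closure (isCompact_piece k)
    ⟨_, dyadic_mem_piece k⟩ ((piece_subset_exampleSet k).trans hA)
  obtain ⟨d, hd0, hd1, hd2⟩ := ((eventually_dyadic_lt (hr 0)).and
    ((eventually_dyadic_lt (hr 1)).and (eventually_dyadic_lt (hr 2)))).exists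
  refine ⟨n 0 ⊔ n 1 ⊔ n 2, d, fun k hk => ?_⟩
  obtain ⟨ε, hε, hεx⟩ := hx k
  have hdr : dyadic d < r k := by interval_cases k <;> assumption
  have hnk : n k ≤ n 0 ⊔ n 1 ⊔ n 2 := by interval_cases k <;> simp
  refine ⟨ε, hε, fun y hy => closure_mono (hmono hnk) (hsub k ⟨hy.1, ?_⟩)⟩
  exact Metric.closedBall_subset_ball hdr (hεx ▸ hy.2)

/-- In epochs `s` and `s + 1` some piece `k ≤ 2` dips in neither, so it has half of its digits
in `(epochStart s, j]` free. -/
lemma eventually_pow_le_capacity {A : ℕ → Set ℝ} {n d : ℕ}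
    (hcyl : ∀ k ≤ 2, IsDenseInCylinder (A n) k d) :
    ∀ᶠ j in atTop, (2 : ℝ≥0∞) ^ ((j - epochStart (epoch j - 1)) / 2 - d) ≤
      capacity (dyadic (j + 1)) (A n) := by
  filter_upwards [tendsto_epoch.eventually (eventually_ge_atTop 4)] with j hj
  obtain ⟨s, hs⟩ : ∃ s, epoch j = s + 1 := ⟨epoch j - 1, by omega⟩
  obtain ⟨k, hk, hks, hks1⟩ := exists_le_two_ne (dipIndex s) (dipIndex (s + 1))
  have hj : j ≤ epochStart (s + 2) := by simpa [hs] using le_epochStart_epoch_succ j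
  have hhalf := half_le_freeCount (by omega) hj (Ne.symm hks) (Ne.symm hks1)
  have := freeCount_anti_left (k := k) (b := j) (Nat.zero_le (epochStart s))
  have := freeCount_le_add k d j
  rw [hs, Nat.add_sub_cancel]
  exact (pow_le_pow_right₀ one_le_two (by omega)).trans (pow_freeCount_le_capacity (hcyl k hk) j)

lemma eventually_mul_le_half_sub (d : ℕ) {z : ℝ} (hz : z < 1 / 2) :
    ∀ᶠ j : ℕ in atTop, z * (j + 2) ≤ ((j - epochStart (epoch j - 1)) / 2 - d : ℕ) := by
  filter_upwards [eventually_epochStart_pred_epoch_le_mul (sub_pos.2 hz),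
    tendsto_natCast_atTop_atTop.eventually
      (eventually_ge_atTop ((4 * z + 1 + 2 * d) / (1 / 2 - z)))] with j hτ hj
  rw [div_le_iff₀ (by linarith)] at hj
  have hnat : j ≤ 2 * ((j - epochStart (epoch j - 1)) / 2 - d) + 2 * d + 1 +
      epochStart (epoch j - 1) := by omega
  have hreal : (j : ℝ) ≤ 2 * ((j - epochStart (epoch j - 1)) / 2 - d : ℕ) + 2 * d + 1 +
      epochStart (epoch j - 1) := by exact_mod_cast hnat
  nlinarith

lemma half_le_dpdim_exampleSet : ((1 / 2 : ℝ) : EReal) ≤ dpdim exampleSet := by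
  refine le_dpdim fun A hmono hA => ?_
  obtain ⟨n, d, hcyl⟩ := exists_cylinders_subset_closure hmono hA.superset
  exact ⟨n, le_lbdim_of_pow_le_capacity _ _ _ (eventually_pow_le_capacity hcyl)
    fun z hz => eventually_mul_le_half_sub d hz⟩

lemma dpdim_exampleSet : dpdim exampleSet = (1 / 2 : ℝ) :=
  le_antisymm dpdim_exampleSet_le half_le_dpdim_exampleSet

end DimensionGap

open DimensionGap in
/-- Example `ex:3x`. There is a compact set `X ⊆ ℝ` with
`lpdim X = 0`, `dpdim X = 1/2` and `lbdim X = 1`; in particular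
`lpdim X < dpdim X < lbdim X`. -/
theorem stmt17 :
    ∃ X : Set ℝ, IsCompact X ∧ lpdim X = (0 : EReal) ∧
      dpdim X = ((1/2 : ℝ) : EReal) ∧ lbdim X = (1 : EReal) ∧
      lpdim X < dpdim X ∧ dpdim X < lbdim X := by
  refine ⟨exampleSet, isCompact_exampleSet, lpdim_exampleSet, dpdim_exampleSet,
    lbdim_exampleSet, ?_, ?_⟩
  · rw [lpdim_exampleSet, dpdim_exampleSet, ← EReal.coe_zero, EReal.coe_lt_coe_iff]
    norm_num
  · rw [dpdim_exampleSet, lbdim_exampleSet, ← EReal.coe_one, EReal.coe_lt_coe_iff]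
    norm_num
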